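/- For every positive integer k, the generating function Φ_k(q) = Σ_{n≥0} φ_k(n) q^n satisfies the congruence Φ_k(q) ≡ (q;q)_∞ / (q^{k+1};q^{k+1})_∞ (mod 2), i.e., all coefficients of the difference of these two power series (as formal power series over ℤ) are even. -/

import Mathlib

/-- Andrews' generalized Frobenius partition function `φ_k(n)`: the number of
two-rowed arrays `(a_1,…,a_s; b_1,…,b_s)` of nonnegative integers, each row
non-increasing with each entry repeated at most `k` times per row, and
`n = s + Σ a_i + Σ b_i`. -/
noncomputable def genFrobPhi (k n : ℕ) : ℕ :=
  Set.ncard {x : Σ s : ℕ, (Fin s → ℕ) × (Fin s → ℕ) |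
    (∀ i j : Fin x.1, i ≤ j → x.2.1 j ≤ x.2.1 i) ∧
    (∀ i j : Fin x.1, i ≤ j → x.2.2 j ≤ x.2.2 i) ∧
    (∀ v : ℕ, (Finset.univ.filter fun i => x.2.1 i = v).card ≤ k) ∧
    (∀ v : ℕ, (Finset.univ.filter fun i => x.2.2 i = v).card ≤ k) ∧
    n = x.1 + (∑ i, x.2.1 i) + (∑ i, x.2.2 i)}
/-- `(q^m; q^m)_∞ = ∏_{i ≥ 1} (1 - q^{m i})` as a formal power series over ℤ,
defined coefficientwise via the (stabilizing) partial products: for `m ≥ 1`,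
the coefficient of `q^n` in `∏_{i=1}^{N} (1 - q^{m i})` is independent of `N`
once `N ≥ n`. -/
noncomputable def pochSelf (m : ℕ) : PowerSeries ℤ :=
  PowerSeries.mk fun n => PowerSeries.coeff n
    (∏ i ∈ Finset.range (n + 1), (1 - (PowerSeries.X : PowerSeries ℤ) ^ (m * (i + 1))))

/-!
Swapping the two rows is an involution on the arrays counted by `φ_k(n)`, so `φ_k(n)` has the
parity of the number of arrays `(a; a)` with equal rows. These correspond to the partitions of `n`
into the odd parts `2 a_i + 1`, each repeated at most `k` times, whose generating function is
`∏_{i odd} (1 - q^{(k+1) i}) / (1 - q^i)`. Modulo 2, with `O_m = ∏_{i odd} (1 - q^{m i})`,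
`(q^m; q^m)_∞ = O_m · (q^{2m}; q^{2m})_∞ ≡ O_m · (q^m; q^m)_∞²`, so `O_m ≡ 1 / (q^m; q^m)_∞` and
the generating function is congruent to `O_{k+1} / O_1 ≡ (q; q)_∞ / (q^{k+1}; q^{k+1})_∞`.
-/

open PowerSeries Finset Nat.Partition
open scoped PowerSeries.WithPiTopology

namespace PowerSeries

variable {R : Type*} [CommRing R]

theorem X_pow_dvd_prod_sub_one {ι : Type*} {s : Finset ι} {f : ι → R⟦X⟧} {N : ℕ}
    (hf : ∀ i ∈ s, X ^ N ∣ f i - 1) : X ^ N ∣ ∏ i ∈ s, f i - 1 :=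
  prod_induction f (fun g ↦ X ^ N ∣ g - 1)
    (fun a b ha hb ↦ by simpa [mul_sub, sub_mul] using dvd_add (dvd_mul_of_dvd_right hb a) ha)
    (by simp) hf

theorem coeff_mul_of_X_pow_dvd_sub_one {d : ℕ} {g : R⟦X⟧} (hg : X ^ (d + 1) ∣ g - 1)
    (f : R⟦X⟧) : coeff d (g * f) = coeff d f := by
  have h : X ^ (d + 1) ∣ g * f - f := by simpa [sub_mul] using dvd_mul_of_dvd_left hg f
  simpa [sub_eq_zero] using X_pow_dvd_iff.1 h d (by omega)

theorem hasProd_mk_coeff_prod_range [TopologicalSpace R] {f : ℕ → R⟦X⟧}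
    (hf : ∀ i, X ^ (i + 1) ∣ f i - 1) :
    HasProd f (mk fun n ↦ coeff n (∏ i ∈ range (n + 1), f i)) := by
  rw [HasProd, WithPiTopology.tendsto_iff_coeff_tendsto]
  refine fun d ↦ tendsto_atTop_of_eventually_const (i₀ := range (d + 1)) fun s hs ↦ ?_
  rw [coeff_mk, ← prod_sdiff hs]
  refine coeff_mul_of_X_pow_dvd_sub_one (X_pow_dvd_prod_sub_one fun i hi ↦ ?_) _
  have : d < i := by simpa using (mem_sdiff.1 hi).2
  exact (pow_dvd_pow X (by omega)).trans (hf i)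

theorem X_pow_succ_dvd_one_sub_X_pow_sub_one {m : ℕ} (hm : 0 < m) (i : ℕ) :
    X ^ (i + 1) ∣ (1 - X ^ (m * (i + 1)) : R⟦X⟧) - 1 := by
  rw [sub_sub_cancel_left, dvd_neg]
  exact pow_dvd_pow X (by nlinarith)

theorem one_sub_sq_of_charTwo [CharP R 2] (f : R⟦X⟧) : (1 - f) ^ 2 = 1 - f ^ 2 := by
  have h2 : (2 : R⟦X⟧) = 0 := by rw [← map_ofNat C 2, CharTwo.two_eq_zero, map_zero]
  linear_combination (f ^ 2 - f) * h2

end PowerSeries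

section qPochhammer

variable {R : Type*} [CommRing R]

theorem constantCoeff_pochSelf {m : ℕ} (hm : 0 < m) : constantCoeff (pochSelf m) = 1 := by
  rw [← coeff_zero_eq_constantCoeff_apply, pochSelf, coeff_mk]
  simp [hm.ne']

theorem hasProd_map_pochSelf [TopologicalSpace R] (φ : ℤ →+* R) {m : ℕ} (hm : 0 < m) :
    HasProd (fun i ↦ (1 - X ^ (m * (i + 1)) : R⟦X⟧)) ((pochSelf m).map φ) := by
  convert hasProd_mk_coeff_prod_range (X_pow_succ_dvd_one_sub_X_pow_sub_one hm) using 1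
  ext n
  rw [coeff_map, pochSelf, coeff_mk, coeff_mk, ← coeff_map]
  simp

theorem multipliable_ite_even_one_sub_X_pow [TopologicalSpace R] {m : ℕ} (hm : 0 < m) :
    Multipliable fun i ↦ if Even (i + 1) then 1 else (1 - X ^ (m * (i + 1)) : R⟦X⟧) :=
  (hasProd_mk_coeff_prod_range fun i ↦ by
    split_ifs
    · simp
    · exact X_pow_succ_dvd_one_sub_X_pow_sub_one hm i).multipliable

theorem map_pochSelf_mul_eq_one [CharP R 2] [TopologicalSpace R] [IsTopologicalRing R]
    [T2Space R] {m : ℕ} (hm : 0 < m) {o : R⟦X⟧}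
    (ho : HasProd (fun i ↦ if Even (i + 1) then 1 else (1 - X ^ (m * (i + 1)) : R⟦X⟧)) o) :
    (pochSelf m).map (Int.castRingHom R) * o = 1 := by
  set E := (pochSelf m).map (Int.castRingHom R)
  have hE := hasProd_map_pochSelf (Int.castRingHom R) hm
  -- `(q^{2m}; q^{2m})_∞ = (q^m; q^m)_∞²` in characteristic 2, as a product over the even parts.
  have hEven : HasProd (fun i ↦ if Even (i + 1) then (1 - X ^ (m * (i + 1)) : R⟦X⟧) else 1)
      (E ^ 2) := by
    rw [← one_mul (E ^ 2)]
    refine HasProd.even_mul_odd ?_ ?_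
    · convert hasProd_one with i
      simp
    · convert hE.mul hE using 1
      · ext1 i
        rw [if_pos ⟨i + 1, by ring⟩, ← sq, one_sub_sq_of_charTwo, ← pow_mul]
        ring_nf
      · exact sq E
  have hsplit : E = o * E ^ 2 := by
    refine hE.unique ?_
    convert ho.mul hEven with i
    split_ifs <;> simp
  have hunit : IsUnit E := by
    rw [isUnit_iff_constantCoeff, ← coeff_zero_eq_constantCoeff_apply, coeff_map,
      coeff_zero_eq_constantCoeff_apply, constantCoeff_pochSelf hm, map_one]
    exact isUnit_one
  apply hunit.mul_left_cancel
  linear_combination hsplit.symm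

end qPochhammer

namespace Nat.Partition

variable {R : Type*} [CommSemiring R]

theorem coeff_genFun_odds_inter_countRestricted (k n : ℕ) :
    coeff n (genFun fun i c ↦ if ¬Even i ∧ c < k + 1 then (1 : R) else 0) =
      #(odds n ∩ countRestricted n (k + 1)) := by
  simp_rw [coeff_genFun, odds, restricted, countRestricted, ← filter_and, card_filter,
    Finsupp.prod, prod_boole]
  simp [forall_and]

theorem hasProd_genFun_odds_inter_countRestricted [TopologicalSpace R] [T2Space R] (k : ℕ) :
    HasProd (fun i ↦ if Even (i + 1) then 1 else ∑ j ∈ range (k + 1), (X : R⟦X⟧) ^ ((i + 1) * j))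
      (genFun fun i c ↦ if ¬Even i ∧ c < k + 1 then (1 : R) else 0) := by
  convert hasProd_genFun (R := R) _ using 1
  ext1 i
  split_ifs with hi
  · simp [hi]
  · rw [sum_range_succ', tsum_eq_sum (s := range k) fun j hj ↦ by simp_all, add_comm]
    simp only [hi, not_false_eq_true, true_and, ite_smul, one_smul, zero_smul,
      add_lt_add_iff_right]
    exact congrArg _ (sum_congr rfl fun j hj ↦ (if_pos (mem_range.1 hj)).symm)

theorem genFun_odds_inter_countRestricted_mul_map_pochSelf {R : Type*} [CommRing R] [CharP R 2]
    (k : ℕ) :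
    genFun (fun i c ↦ if ¬Even i ∧ c < k + 1 then (1 : R) else 0) *
      (pochSelf (k + 1)).map (Int.castRingHom R) = (pochSelf 1).map (Int.castRingHom R) := by
  -- The identity is algebraic: the discrete topology only serves to form the infinite products.
  let _ : TopologicalSpace R := ⊥
  have _ : DiscreteTopology R := ⟨rfl⟩
  set G := genFun fun i c ↦ if ¬Even i ∧ c < k + 1 then (1 : R) else 0
  obtain ⟨o₁, ho₁⟩ := multipliable_ite_even_one_sub_X_pow (R := R) one_pos
  obtain ⟨o, ho⟩ := multipliable_ite_even_one_sub_X_pow (R := R) (by omega : 0 < k + 1)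
  have hfactor (i : ℕ) :
      ((if Even (i + 1) then 1 else ∑ j ∈ range (k + 1), X ^ ((i + 1) * j)) *
        if Even (i + 1) then 1 else 1 - X ^ (1 * (i + 1)) : R⟦X⟧) =
      if Even (i + 1) then 1 else 1 - X ^ ((k + 1) * (i + 1)) := by
    split_ifs
    · exact one_mul 1
    · simp_rw [one_mul, pow_mul, geom_sum_mul_neg, ← pow_mul, mul_comm]
  have hG := (hasProd_genFun_odds_inter_countRestricted k).mul ho₁
  simp_rw [hfactor] at hG
  have hGo : G * o₁ = o := hG.unique ho
  have h₁ := map_pochSelf_mul_eq_one one_pos ho₁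
  have h₂ := map_pochSelf_mul_eq_one (by omega : 0 < k + 1) ho
  set E₁ := (pochSelf 1).map (Int.castRingHom R)
  set E := (pochSelf (k + 1)).map (Int.castRingHom R)
  linear_combination (-G * E) * h₁ + E₁ * E * hGo + E₁ * h₂

end Nat.Partition

section AntitoneTuple

variable {α : Type*}

theorem card_filter_eq_count_coe_ofFn [DecidableEq α] {s : ℕ} (a : Fin s → α) (v : α) :
    #{i | a i = v} = (List.ofFn a : Multiset α).count v := by
  simp [← Fin.univ_val_map, Multiset.count_map, card_def, filter_val, eq_comm]

variable [LinearOrder α]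

theorem sigma_eq_of_antitone_of_coe_ofFn_eq {s t : ℕ} {a : Fin s → α} {b : Fin t → α}
    (ha : Antitone a) (hb : Antitone b) (h : (List.ofFn a : Multiset α) = List.ofFn b) :
    (⟨s, a⟩ : Σ n, Fin n → α) = ⟨t, b⟩ :=
  List.ofFn_inj'.1 <| (Multiset.coe_eq_coe.1 h).eq_of_sortedGE
    (List.sortedGE_ofFn_iff.2 ha) (List.sortedGE_ofFn_iff.2 hb)

theorem exists_antitone_coe_ofFn_eq (M : Multiset α) :
    ∃ s, ∃ a : Fin s → α, Antitone a ∧ (List.ofFn a : Multiset α) = M :=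
  ⟨_, (M.sort (· ≥ ·)).get, List.sortedGE_iff_pairwise.2 (M.pairwise_sort _),
    by rw [List.ofFn_get, Multiset.sort_eq]⟩

end AntitoneTuple

theorem Finset.cast_card_zmod_two_eq_card_filter_isFixedPt {α : Type*} [DecidableEq α]
    (s : Finset α) {σ : α → α} (hσs : ∀ x ∈ s, σ x ∈ s) (hσ : ∀ x ∈ s, σ (σ x) = x) :
    (#s : ZMod 2) = #{x ∈ s | Function.IsFixedPt σ x} := by
  rw [← card_filter_add_card_filter_not (Function.IsFixedPt σ), Nat.cast_add,
    add_eq_left, card_eq_sum_ones, Nat.cast_sum, Nat.cast_one]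
  refine sum_involution (fun x _ ↦ σ x) (fun _ _ ↦ rfl) (fun x hx _ ↦ (mem_filter.1 hx).2)
    (fun x hx ↦ ?_) (fun x hx ↦ hσ x (mem_filter.1 hx).1)
  obtain ⟨hxs, hx⟩ := mem_filter.1 hx
  refine mem_filter.2 ⟨hσs x hxs, fun h ↦ hx ?_⟩
  rw [Function.IsFixedPt, hσ x hxs] at h
  exact h.symm

theorem Multiset.sum_map_two_mul_add_one (M : Multiset ℕ) :
    (M.map (2 * · + 1)).sum = card M + 2 * M.sum := by
  rw [Multiset.sum_map_add, Multiset.sum_map_mul_left, Multiset.map_const', Multiset.sum_replicate,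
    Multiset.map_id', smul_eq_mul, mul_one, add_comm]

namespace Nat.Partition

def ofHalves {n : ℕ} (M : Multiset ℕ) (h : Multiset.card M + 2 * M.sum = n) : n.Partition where
  parts := M.map (2 * · + 1)
  parts_pos := by simp
  parts_sum := by rw [Multiset.sum_map_two_mul_add_one, h]

theorem ofHalves_injective {n : ℕ} {M M' : Multiset ℕ} {h : Multiset.card M + 2 * M.sum = n}
    {h' : Multiset.card M' + 2 * M'.sum = n} (hM : ofHalves M h = ofHalves M' h') : M = M' :=
  Multiset.map_injective (fun a b hab ↦ by simpa using hab) (congrArg parts hM)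

theorem ofHalves_mem_odds_inter_countRestricted_iff {n k : ℕ} {M : Multiset ℕ}
    {h : Multiset.card M + 2 * M.sum = n} :
    ofHalves M h ∈ odds n ∩ countRestricted n (k + 1) ↔ ∀ v, M.count v ≤ k := by
  have hinj : Function.Injective (2 * · + 1) := fun a b hab ↦ by simpa using hab
  simp only [odds, restricted, countRestricted, mem_inter, mem_filter, mem_univ, true_and,
    ofHalves, Multiset.forall_mem_map_iff, Multiset.count_map_eq_count' _ _ hinj, Nat.lt_succ_iff]
  refine ⟨fun ⟨_, hc⟩ v ↦ ?_, fun hc ↦ ⟨fun v _ ↦ by simp [parity_simps], fun v _ ↦ hc v⟩⟩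
  by_cases hv : v ∈ M
  · exact hc v hv
  · simp [Multiset.count_eq_zero_of_notMem hv]

theorem exists_ofHalves_eq {n : ℕ} {p : n.Partition} (hp : p ∈ odds n) :
    ∃ M h, ofHalves M h = p := by
  have hodd : ∀ i ∈ p.parts, Odd i := by simpa [odds, restricted] using hp
  have hparts : (p.parts.map (· / 2)).map (2 * · + 1) = p.parts := by
    rw [Multiset.map_map]
    exact (Multiset.map_congr rfl fun i hi ↦ Nat.two_mul_div_two_add_one_of_odd (hodd i hi)).trans
      (Multiset.map_id _)
  refine ⟨p.parts.map (· / 2), ?_, Nat.Partition.ext hparts⟩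
  rw [← Multiset.sum_map_two_mul_add_one, hparts, p.parts_sum]

end Nat.Partition

/-- `genFrobPhi k n` is by definition the `ncard` of this set. -/
def genFrobArrays (k n : ℕ) : Set (Σ s : ℕ, (Fin s → ℕ) × (Fin s → ℕ)) :=
  {x | Antitone x.2.1 ∧ Antitone x.2.2 ∧ (∀ v, #{i | x.2.1 i = v} ≤ k) ∧
    (∀ v, #{i | x.2.2 i = v} ≤ k) ∧ n = x.1 + ∑ i, x.2.1 i + ∑ i, x.2.2 i}

theorem genFrobArrays_finite (k n : ℕ) : (genFrobArrays k n).Finite := by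
  refine ((range (n + 1)).sigma fun s ↦ Fintype.piFinset (fun _ : Fin s ↦ range (n + 1)) ×ˢ
    Fintype.piFinset fun _ ↦ range (n + 1)).finite_toSet.subset ?_
  rintro ⟨s, a, b⟩ ⟨-, -, -, -, hn : n = s + ∑ i, a i + ∑ i, b i⟩
  have ha (i : Fin s) : a i ≤ ∑ j, a j := single_le_sum (fun j _ ↦ (a j).zero_le) (mem_univ i)
  have hb (i : Fin s) : b i ≤ ∑ j, b j := single_le_sum (fun j _ ↦ (b j).zero_le) (mem_univ i)
  simp only [coe_sigma, Set.mem_sigma_iff, coe_range, Set.mem_Iio, coe_product, Set.mem_prod,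
    Fintype.coe_piFinset, Set.mem_pi, Set.mem_univ, forall_const]
  exact ⟨by omega, fun i ↦ by grind, fun i ↦ by grind⟩

noncomputable def genFrobDiag (k n : ℕ) : Finset (Σ s : ℕ, (Fin s → ℕ) × (Fin s → ℕ)) :=
  {x ∈ (genFrobArrays_finite k n).toFinset | x.2.1 = x.2.2}

theorem mem_genFrobDiag {k n s : ℕ} {a b : Fin s → ℕ} :
    ⟨s, (a, b)⟩ ∈ genFrobDiag k n ↔ a = b ∧ Antitone a ∧
      (∀ v, (List.ofFn a : Multiset ℕ).count v ≤ k) ∧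
      Multiset.card (List.ofFn a : Multiset ℕ) + 2 * (List.ofFn a : Multiset ℕ).sum = n := by
  simp only [genFrobDiag, mem_filter, Set.Finite.mem_toFinset, genFrobArrays,
    ← card_filter_eq_count_coe_ofFn, Multiset.coe_card, List.length_ofFn, Multiset.sum_coe,
    List.sum_ofFn, Set.mem_ofPred_eq]
  constructor
  · rintro ⟨⟨ha, -, hc, -, hn⟩, rfl⟩
    exact ⟨rfl, ha, hc, by omega⟩
  · rintro ⟨rfl, ha, hc, hn⟩
    exact ⟨⟨ha, ha, hc, hc, by omega⟩, rfl⟩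

theorem card_genFrobDiag (k n : ℕ) :
    #(genFrobDiag k n) = #(odds n ∩ countRestricted n (k + 1)) := by
  refine card_bij (fun x hx ↦ ofHalves (List.ofFn x.2.1) <| by
      obtain ⟨s, a, b⟩ := x
      exact (mem_genFrobDiag.1 hx).2.2.2) ?_ ?_ ?_
  · rintro ⟨s, a, b⟩ hx
    exact ofHalves_mem_odds_inter_countRestricted_iff.2 (mem_genFrobDiag.1 hx).2.2.1
  · rintro ⟨s, a, b⟩ hx ⟨t, a', b'⟩ hy hxy
    obtain ⟨rfl, ha, -⟩ := mem_genFrobDiag.1 hx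
    obtain ⟨rfl, ha', -⟩ := mem_genFrobDiag.1 hy
    exact congrArg (fun y : Σ s, Fin s → ℕ ↦ (⟨y.1, (y.2, y.2)⟩ : Σ s, (Fin s → ℕ) × (Fin s → ℕ)))
      (sigma_eq_of_antitone_of_coe_ofFn_eq ha ha' (ofHalves_injective hxy))
  · intro p hp
    obtain ⟨M, hM, rfl⟩ := exists_ofHalves_eq (mem_inter.1 hp).1
    obtain ⟨s, a, ha, rfl⟩ := exists_antitone_coe_ofFn_eq M
    exact ⟨⟨s, (a, a)⟩, mem_genFrobDiag.2
      ⟨rfl, ha, ofHalves_mem_odds_inter_countRestricted_iff.1 hp, hM⟩, rfl⟩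

theorem natCast_genFrobPhi_zmod_two (k n : ℕ) :
    (genFrobPhi k n : ZMod 2) = #(odds n ∩ countRestricted n (k + 1)) := by
  let swap : (Σ s : ℕ, (Fin s → ℕ) × (Fin s → ℕ)) → Σ s : ℕ, (Fin s → ℕ) × (Fin s → ℕ) :=
    fun x ↦ ⟨x.1, x.2.swap⟩
  have hswap : ∀ x ∈ (genFrobArrays_finite k n).toFinset,
      swap x ∈ (genFrobArrays_finite k n).toFinset := by
    rintro ⟨s, a, b⟩ hx
    simp only [Set.Finite.mem_toFinset, genFrobArrays, Set.mem_ofPred_eq] at hx ⊢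
    obtain ⟨ha, hb, hca, hcb, hn : n = s + ∑ i, a i + ∑ i, b i⟩ := hx
    exact ⟨hb, ha, hcb, hca, by simp only [swap, Prod.fst_swap, Prod.snd_swap]; omega⟩
  change ((genFrobArrays k n).ncard : ZMod 2) = _
  rw [← card_genFrobDiag, Set.ncard_eq_toFinset_card _ (genFrobArrays_finite k n),
    cast_card_zmod_two_eq_card_filter_isFixedPt _ hswap fun _ _ ↦ rfl, genFrobDiag]
  congr 2
  refine filter_congr fun ⟨s, a, b⟩ _ ↦ ?_
  simp [swap, Function.IsFixedPt, eq_comm]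

theorem map_mk_genFrobPhi (k : ℕ) :
    (mk fun m ↦ (genFrobPhi k m : ℤ)).map (Int.castRingHom (ZMod 2)) =
      genFun fun i c ↦ if ¬Even i ∧ c < k + 1 then (1 : ZMod 2) else 0 := by
  ext n
  rw [coeff_map, coeff_mk, coeff_genFun_odds_inter_countRestricted, ← natCast_genFrobPhi_zmod_two,
    eq_intCast, Int.cast_natCast]

theorem phi_genfun_mod_two_general (k : ℕ) (n : ℕ) :
    2 ∣ PowerSeries.coeff n
      ((PowerSeries.mk fun m => (genFrobPhi k m : ℤ)) -
        pochSelf 1 * PowerSeries.invOfUnit (pochSelf (k + 1)) 1) := by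
  set ψ := Int.castRingHom (ZMod 2)
  have hinv : (pochSelf (k + 1)).map ψ * (invOfUnit (pochSelf (k + 1)) 1).map ψ = 1 := by
    rw [← map_mul, mul_invOfUnit _ _ (by simpa using constantCoeff_pochSelf k.succ_pos), map_one]
  have hmod : ((mk fun m ↦ (genFrobPhi k m : ℤ)) -
      pochSelf 1 * invOfUnit (pochSelf (k + 1)) 1).map ψ = 0 := by
    rw [map_sub, map_mul, map_mk_genFrobPhi,
      ← genFun_odds_inter_countRestricted_mul_map_pochSelf k, mul_assoc, hinv, mul_one, sub_self]
  have hcoeff := congrArg (coeff n) hmod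
  rw [coeff_map, map_zero] at hcoeff
  exact (ZMod.intCast_zmod_eq_zero_iff_dvd _ 2).1 hcoeff

/-- Φ_k(q) ≡ (q;q)_∞ / (q^{k+1};q^{k+1})_∞ (mod 2): every coefficient of the
difference of these integer power series is even.  Here the reciprocal of
`(q^{k+1};q^{k+1})_∞` is its power-series inverse (its constant term is 1). -/
theorem phi_genfun_mod_two (k : ℕ) (hk : 0 < k) (n : ℕ) :
    2 ∣ PowerSeries.coeff n
      ((PowerSeries.mk fun m => (genFrobPhi k m : ℤ)) -
        pochSelf 1 * PowerSeries.invOfUnit (pochSelf (k + 1)) 1) :=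
  phi_genfun_mod_two_general k n
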